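/- arXiv:2508.10138 — 4 statements merged into one kernel-verified Lean document; each statement's English description precedes it below -/
import Mathlib

section
/- Let σ > 0, Σ₁ > 0, Σ₂ > 0, I > 0, J ≥ I, and let the cubic polynomial f(ξ) = 2(I + (Σ₁/σ²)(I−J)ξ)((Σ₁/σ²)ξ² − 1) + ξ(1+ξ)(Σ₂/σ² − (Σ₁/σ²)J). Suppose Σ₂/σ² − (Σ₁/σ²)J > 0. Then f(0) < 0 and f(σ/√Σ₁) > 0, so f has a root ξ with 0 < ξ < σ/√Σ₁. -/
/-- Sign change of the first-order-condition cubic, giving existence of a root in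
`(0, σ/√Σ₁)`. -/
theorem stmt_1 (σ S1 S2 I J : ℝ) (hσ : 0 < σ) (hS1 : 0 < S1) (hS2 : 0 < S2)
    (hI : 0 < I) (hJ : I ≤ J)
    (f : ℝ → ℝ)
    (hf : ∀ ξ : ℝ, f ξ = 2 * (I + (S1 / σ ^ 2) * (I - J) * ξ) * ((S1 / σ ^ 2) * ξ ^ 2 - 1)
        + ξ * (1 + ξ) * (S2 / σ ^ 2 - (S1 / σ ^ 2) * J))
    (hK : 0 < S2 / σ ^ 2 - (S1 / σ ^ 2) * J) :
    f 0 < 0 ∧ 0 < f (σ / Real.sqrt S1) ∧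
      ∃ ξ : ℝ, 0 < ξ ∧ ξ < σ / Real.sqrt S1 ∧ f ξ = 0 := by
  have hfe : f = fun ξ : ℝ => 2 * (I + (S1 / σ ^ 2) * (I - J) * ξ) * ((S1 / σ ^ 2) * ξ ^ 2 - 1)
        + ξ * (1 + ξ) * (S2 / σ ^ 2 - (S1 / σ ^ 2) * J) := funext hf
  have hsq : 0 < Real.sqrt S1 := Real.sqrt_pos.mpr hS1
  have hb : 0 < σ / Real.sqrt S1 := div_pos hσ hsq
  have h0 : f 0 < 0 := by rw [hf]; ring_nf; linarith
  have hbv : (S1 / σ ^ 2) * (σ / Real.sqrt S1) ^ 2 = 1 := by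
    rw [div_pow, Real.sq_sqrt hS1.le]
    field_simp
  have h1 : 0 < f (σ / Real.sqrt S1) := by
    rw [hf, hbv]
    have : (0:ℝ) < (σ / Real.sqrt S1) * (1 + σ / Real.sqrt S1) := by positivity
    nlinarith
  have hcont : ContinuousOn f (Set.Icc 0 (σ / Real.sqrt S1)) := by
    rw [hfe]; fun_prop
  obtain ⟨ξ, hξmem, hξ⟩ := intermediate_value_Ioo hb.le hcont
    (Set.mem_Ioo.mpr ⟨h0, h1⟩)
  exact ⟨h0, h1, ξ, hξmem.1, hξmem.2, hξ⟩
end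

section
/- Let λ, r, I, J be real numbers with 1 + r > 0 and (1+r)I − rJ > 0. Define I' = (1 − (1+r)²β²)I + β²r(1+r)J where β = (2(1+r)I − rJ − λ)/(2(1+r)((1+r)I − rJ)), and J' = λ/(1+r). Then I' − J' = −(λ − rJ)²/(4(1+r)((1+r)I − rJ)) ≤ 0, i.e., I' ≤ J'. -/
/-- The identity `I' − J' = −(λ − rJ)²/(4(1+r)((1+r)I − rJ))` and the resulting
inequality `I' ≤ J'` for the value-function coefficient recursion. -/
theorem stmt_4 (lam r I J β I' J' : ℝ)
    (hr : 0 < 1 + r) (hSOC : 0 < (1 + r) * I - r * J)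
    (hβ : β = (2 * (1 + r) * I - r * J - lam) / (2 * (1 + r) * ((1 + r) * I - r * J)))
    (hI' : I' = (1 - (1 + r) ^ 2 * β ^ 2) * I + β ^ 2 * r * (1 + r) * J)
    (hJ' : J' = lam / (1 + r)) :
    I' - J' = -(lam - r * J) ^ 2 / (4 * (1 + r) * ((1 + r) * I - r * J)) ∧ I' ≤ J' := by
  have h1 : (1 + r) ≠ 0 := ne_of_gt hr
  have h2 : ((1 + r) * I - r * J) ≠ 0 := ne_of_gt hSOC
  have key : I' - J' = -(lam - r * J) ^ 2 / (4 * (1 + r) * ((1 + r) * I - r * J)) := by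
    subst hβ hI' hJ'
    field_simp
    ring
  refine ⟨key, ?_⟩
  have hle : I' - J' ≤ 0 := by
    rw [key]
    apply div_nonpos_of_nonpos_of_nonneg
    · simp [sq_nonneg]
    · positivity
  linarith
end

section
/- Let σ > 0, Σ₁ > 0, Σ₂ > 0, I > 0, J with J ≥ I, ξ' > 0 (previous-step ξ), and suppose Σ₂/σ² − (Σ₁/σ²)J = (1+ξ')Σ₂/((Σ₁+σ²)ξ' + σ²). Let ξ satisfy 0 < ξ < σ/√Σ₁ and the cubic equation 2(I + (Σ₁/σ²)(I−J)ξ)((Σ₁/σ²)ξ² − 1) + ξ(1+ξ)(Σ₂/σ² − (Σ₁/σ²)J) = 0. Then I + (Σ₁/σ²)(I−J)ξ = σ²ξ(1+ξ)(1+ξ')Σ₂ / (2(σ² − Σ₁ξ²)((Σ₁+σ²)ξ' + σ²)) > 0. -/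
/-- Verification of the second-order condition (SOC2): at a root of the
first-order-condition cubic, `(1+r)I − rJ = I + (Σ₁/σ²)(I−J)ξ` is strictly positive. -/
theorem stmt_5 (σ S1 S2 I J ξ' ξ : ℝ) (hσ : 0 < σ) (hS1 : 0 < S1) (hS2 : 0 < S2)
    (hI : 0 < I) (hJ : I ≤ J) (hξ' : 0 < ξ')
    (hJexp : S2 / σ ^ 2 - (S1 / σ ^ 2) * J = (1 + ξ') * S2 / ((S1 + σ ^ 2) * ξ' + σ ^ 2))
    (hξpos : 0 < ξ) (hξlt : ξ < σ / Real.sqrt S1)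
    (hroot : 2 * (I + (S1 / σ ^ 2) * (I - J) * ξ) * ((S1 / σ ^ 2) * ξ ^ 2 - 1)
        + ξ * (1 + ξ) * (S2 / σ ^ 2 - (S1 / σ ^ 2) * J) = 0) :
    I + (S1 / σ ^ 2) * (I - J) * ξ
        = σ ^ 2 * ξ * (1 + ξ) * (1 + ξ') * S2
          / (2 * (σ ^ 2 - S1 * ξ ^ 2) * ((S1 + σ ^ 2) * ξ' + σ ^ 2)) ∧
      0 < I + (S1 / σ ^ 2) * (I - J) * ξ := by
  have hσ2 : (0:ℝ) < σ ^ 2 := by positivity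
  have hsqrt : 0 < Real.sqrt S1 := Real.sqrt_pos.mpr hS1
  have hmul : ξ * Real.sqrt S1 < σ := by
    rwa [lt_div_iff₀ hsqrt] at hξlt
  have hs : 0 < σ ^ 2 - S1 * ξ ^ 2 := by
    have h2 := mul_pos (sub_pos.2 hmul) (by positivity : (0:ℝ) < σ + ξ * Real.sqrt S1)
    nlinarith [Real.sq_sqrt hS1.le]
  have hD : 0 < (S1 + σ ^ 2) * ξ' + σ ^ 2 := by positivity
  rw [hJexp] at hroot
  have heq : I + (S1 / σ ^ 2) * (I - J) * ξ
      = σ ^ 2 * ξ * (1 + ξ) * (1 + ξ') * S2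
        / (2 * (σ ^ 2 - S1 * ξ ^ 2) * ((S1 + σ ^ 2) * ξ' + σ ^ 2)) := by
    rw [eq_div_iff (by positivity)]
    field_simp at hroot ⊢
    linarith [hroot]
  refine ⟨heq, ?_⟩
  rw [heq]
  positivity
end

section
/- Let I > 0, J ≥ I, K > 0, s > 0, and let f(ξ) = 2(I + s(I−J)ξ)(sξ² − 1) + ξ(1+ξ)K, so that f is a polynomial of degree at most 3 with nonpositive leading coefficient, f(0) < 0 and f(1/√s) > 0; then f has exactly one root in (0, 1/√s). -/
set_option maxHeartbeats 800000 in
/-- Uniqueness of the root of the first-order-condition cubic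
`f(ξ) = 2(I + s(I−J)ξ)(sξ² − 1) + ξ(1+ξ)K` in the interval `(0, 1/√s)`. -/
theorem stmt_11 (I J K s : ℝ) (hI : 0 < I) (hJ : I ≤ J) (hK : 0 < K) (hs : 0 < s)
    (f : ℝ → ℝ)
    (hf : ∀ ξ : ℝ, f ξ = 2 * (I + s * (I - J) * ξ) * (s * ξ ^ 2 - 1) + ξ * (1 + ξ) * K)
    (hf0 : f 0 < 0) (hfx0 : 0 < f (1 / Real.sqrt s)) :
    ∃! ξ : ℝ, 0 < ξ ∧ ξ < 1 / Real.sqrt s ∧ f ξ = 0 := by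
  have hsq : 0 < Real.sqrt s := Real.sqrt_pos.2 hs
  set b := 1 / Real.sqrt s with hb_def
  have hb : 0 < b := by positivity
  have hss : Real.sqrt s ^ 2 = s := Real.sq_sqrt hs.le
  have hlt1 : ∀ ξ : ℝ, 0 < ξ → ξ < b → s * ξ ^ 2 < 1 := by
    intro ξ h0 h1
    have h2 : ξ * Real.sqrt s < 1 := by
      rw [hb_def, lt_div_iff₀ hsq] at h1; linarith
    have h3 : s * ξ ^ 2 = (ξ * Real.sqrt s) ^ 2 := by rw [mul_pow, hss]; ring
    nlinarith [mul_nonneg h0.le hsq.le]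
  have hcont : Continuous f := by
    have hfe : f = fun ξ => 2 * (I + s * (I - J) * ξ) * (s * ξ ^ 2 - 1) + ξ * (1 + ξ) * K :=
      funext hf
    rw [hfe]; continuity
  set a := s * (I - J) with ha_def
  have ha : a ≤ 0 := by
    have : I - J ≤ 0 := by linarith
    exact mul_nonpos_of_nonneg_of_nonpos hs.le this
  -- key: no two distinct roots
  have key : ∀ x y : ℝ, 0 < x → x < b → f x = 0 → 0 < y → y < b → f y = 0 → x < y → False := by
    intro x y hx0 hxb hxf hy0 hyb hyf hxy
    have hsx : s * x ^ 2 < 1 := hlt1 x hx0 hxb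
    have hsy : s * y ^ 2 < 1 := hlt1 y hy0 hyb
    have ex : 2 * (I + a * x) * (1 - s * x ^ 2) = x * (1 + x) * K := by
      have h := hf x; rw [hxf] at h; linear_combination h
    have ey : 2 * (I + a * y) * (1 - s * y ^ 2) = y * (1 + y) * K := by
      have h := hf y; rw [hyf] at h; linear_combination h
    have hpx : 0 < 2 * (I + a * x) * (1 - s * x ^ 2) := by rw [ex]; positivity
    have hpy : 0 < 2 * (I + a * y) * (1 - s * y ^ 2) := by rw [ey]; positivity
    have px : 0 < I + a * x := by nlinarith [hpx, hsx]
    have py : 0 < I + a * y := by nlinarith [hpy, hsy]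
    have hmono : x * (1 + x) * K < y * (1 + y) * K := by
      nlinarith [mul_pos (mul_pos (sub_pos.2 hxy) (by linarith : (0:ℝ) < 1 + x + y)) hK]
    have hax : I + a * y ≤ I + a * x := by
      have := mul_le_mul_of_nonpos_left hxy.le ha
      linarith
    have hsxy : 1 - s * y ^ 2 < 1 - s * x ^ 2 := by
      nlinarith [mul_pos hs (mul_pos (sub_pos.2 hxy) (add_pos hx0 hy0))]
    have c1 : 2 * (I + a * y) * (1 - s * y ^ 2) ≤ 2 * (I + a * x) * (1 - s * y ^ 2) := by
      have := mul_le_mul_of_nonneg_right hax (by linarith : (0:ℝ) ≤ 1 - s * y ^ 2)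
      linarith [this]
    have c2 : 2 * (I + a * x) * (1 - s * y ^ 2) < 2 * (I + a * x) * (1 - s * x ^ 2) := by
      have := mul_lt_mul_of_pos_left hsxy px
      linarith [this]
    linarith
  -- existence via IVT
  have hmem : (0:ℝ) ∈ Set.Ioo (f 0) (f b) := ⟨hf0, hfx0⟩
  obtain ⟨ξ, hξmem, hξf⟩ := intermediate_value_Ioo hb.le hcont.continuousOn hmem
  refine ⟨ξ, ⟨hξmem.1, hξmem.2, hξf⟩, ?_⟩
  rintro y ⟨hy0, hyb, hyf⟩
  rcases lt_trichotomy y ξ with h | h | h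
  · exact absurd (key y ξ hy0 hyb hyf hξmem.1 hξmem.2 hξf h) id
  · exact h
  · exact absurd (key ξ y hξmem.1 hξmem.2 hξf hy0 hyb hyf h) id
end
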